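/- arXiv:1609.04512 — 2 statements merged into one kernel-verified Lean document; each statement's English description precedes it below -/
import Mathlib

section
/- For any platoon scheduling instance in which all release times and all lengths are integers, there exists a minimum-delay valid schedule: a valid schedule whose delay equals the infimum, over all valid schedules, of the schedule delay; moreover this minimum delay is an integer. -/
/-! When release times and lengths are integers, every constraint of validity has the form
`r ≤ c i` or `c i + ℓ ≤ c j` with integers `r`, `ℓ`, so rounding all crossing times down keeps a
schedule valid; it does not increase the delay and makes every platoon's delay an integer. Hence
the infimum of the delays is the least integer delay of a valid schedule, which exists since
delays are nonnegative and a valid schedule (letting platoons cross one by one in release order)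
exists. -/

/-- A platoon scheduling instance: `n` platoons, each with an incoming lane,
a release time and a positive length; platoons on the same lane occupy disjoint
ranges of time; a symmetric irreflexive incompatibility relation says which pairs
of platoons may not occupy the intersection simultaneously. -/
structure PlatoonInstance (n : ℕ) where
  lane : Fin n → ℕ
  r : Fin n → ℝ
  len : Fin n → ℝ
  len_pos : ∀ i, 0 < len i
  incompat : Fin n → Fin n → Prop
  incompat_symm : ∀ i j, incompat i j → incompat j i
  incompat_irrefl : ∀ i, ¬ incompat i i
  lane_disjoint : ∀ i j, i ≠ j → lane i = lane j →
    r i + len i ≤ r j ∨ r j + len j ≤ r i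

/-- A schedule (an assignment of a crossing time to each platoon) is valid if
(1) each crossing time is at least the release time; (2) platoons on the same lane
cross in release order, one finishing before the next one crosses; (3) the open
crossing intervals of incompatible platoons are disjoint. -/
def Valid {n : ℕ} (I : PlatoonInstance n) (c : Fin n → ℝ) : Prop :=
  (∀ i, I.r i ≤ c i) ∧
  (∀ i j, i ≠ j → I.lane i = I.lane j → I.r i + I.len i ≤ I.r j →
    c i + I.len i ≤ c j) ∧
  (∀ i j, I.incompat i j →
    Disjoint (Set.Ioo (c i) (c i + I.len i)) (Set.Ioo (c j) (c j + I.len j)))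

/-- The delay of a schedule: the maximum (supremum) delay of its platoons. -/
noncomputable def scheduleDelay {n : ℕ} (I : PlatoonInstance n) (c : Fin n → ℝ) : ℝ :=
  ⨆ i, (c i - I.r i)

theorem Set.disjoint_Ioo_add_iff {a b p q : ℝ} (hp : 0 < p) (hq : 0 < q) :
    Disjoint (Set.Ioo a (a + p)) (Set.Ioo b (b + q)) ↔ a + p ≤ b ∨ b + q ≤ a := by
  rw [Set.Ioo_disjoint_Ioo, min_le_iff, le_max_iff, le_max_iff]
  constructor
  · rintro ((h | h) | (h | h))
    · linarith
    · exact Or.inl h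
    · exact Or.inr h
    · linarith
  · rintro (h | h)
    · exact Or.inl (Or.inr h)
    · exact Or.inr (Or.inl h)

theorem Int.cast_floor_add_le_cast_floor {R : Type*} [Ring R] [LinearOrder R] [FloorRing R]
    [IsOrderedRing R] {a b : R} {z : ℤ} (h : a + z ≤ b) : (⌊a⌋ : R) + z ≤ ⌊b⌋ := by
  have : ⌊a⌋ + z ≤ ⌊b⌋ := Int.floor_add_intCast a z ▸ Int.floor_le_floor h
  exact_mod_cast this

theorem Real.exists_iSup_eq_intCast {ι : Type*} [Finite ι] (f : ι → ℤ) :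
    ∃ z : ℤ, ⨆ i, (f i : ℝ) = z := by
  cases isEmpty_or_nonempty ι
  · exact ⟨0, by simp [Real.iSup_of_isEmpty]⟩
  · obtain ⟨i, hi⟩ := exists_eq_ciSup_of_finite (f := fun i => (f i : ℝ))
    exact ⟨f i, hi.symm⟩

section

variable {n : ℕ} (I : PlatoonInstance n)

theorem valid_iff (c : Fin n → ℝ) :
    Valid I c ↔ (∀ i, I.r i ≤ c i) ∧
      (∀ i j, i ≠ j → I.lane i = I.lane j → I.r i + I.len i ≤ I.r j →
        c i + I.len i ≤ c j) ∧
      (∀ i j, I.incompat i j → c i + I.len i ≤ c j ∨ c j + I.len j ≤ c i) := by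
  unfold Valid
  simp only [Set.disjoint_Ioo_add_iff (I.len_pos _) (I.len_pos _)]

variable {I}

theorem Valid.scheduleDelay_nonneg {c : Fin n → ℝ} (hc : Valid I c) : 0 ≤ scheduleDelay I c :=
  Real.iSup_nonneg fun i => sub_nonneg.2 (hc.1 i)

theorem scheduleDelay_mono {c c' : Fin n → ℝ} (h : c ≤ c') :
    scheduleDelay I c ≤ scheduleDelay I c' :=
  ciSup_mono (Finite.bddAbove_range _) fun i => sub_le_sub_right (h i) _

/-- Platoons cross one at a time in the order of `k`, in slots of length `∑ len j`, all after
time `∑ |r j|`, which bounds every release time. -/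
theorem valid_of_rank (k : Fin n → ℕ) (hk : Function.Injective k)
    (hkr : ∀ i j, I.r i < I.r j → k i < k j) :
    Valid I fun i => ∑ j, |I.r j| + k i * ∑ j, I.len j := by
  set M := ∑ j, |I.r j|
  set L := ∑ j, I.len j
  have hlen_le : ∀ i, I.len i ≤ L := fun i =>
    Finset.single_le_sum (fun j _ => (I.len_pos j).le) (Finset.mem_univ i)
  have hsep : ∀ i j, k i < k j → M + k i * L + I.len i ≤ M + k j * L := by
    intro i j hij
    have : (k i + 1 : ℝ) * L ≤ k j * L :=
      mul_le_mul_of_nonneg_right (by exact_mod_cast hij) ((I.len_pos i).le.trans (hlen_le i))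
    linarith [hlen_le i]
  refine (valid_iff I _).2 ⟨fun i => ?_, fun i j _ _ hij => ?_, fun i j hij => ?_⟩
  · have hr : I.r i ≤ M :=
      (le_abs_self _).trans
        (Finset.single_le_sum (fun j _ => abs_nonneg (I.r j)) (Finset.mem_univ i))
    have : 0 ≤ (k i : ℝ) * L := mul_nonneg (Nat.cast_nonneg _) ((I.len_pos i).le.trans (hlen_le i))
    linarith
  · exact hsep i j (hkr i j (by linarith [I.len_pos i]))
  · have hne : k i ≠ k j := hk.ne fun h => I.incompat_irrefl i (h ▸ hij)
    rcases hne.lt_or_gt with h | h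
    · exact Or.inl (hsep i j h)
    · exact Or.inr (hsep j i h)

theorem PlatoonInstance.exists_valid (I : PlatoonInstance n) : ∃ c, Valid I c := by
  let k : Fin n → ℕ := fun i => (Tuple.sort I.r).symm i
  refine ⟨_, valid_of_rank k (Fin.val_injective.comp (Tuple.sort I.r).symm.injective) ?_⟩
  intro i j hij
  by_contra! h
  have := Tuple.monotone_sort I.r (Fin.le_iff_val_le_val.2 h)
  simp only [Function.comp_apply, Equiv.apply_symm_apply] at this
  linarith

theorem Valid.floor {c : Fin n → ℝ} (hr : ∀ i, ∃ z : ℤ, I.r i = z)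
    (hlen : ∀ i, ∃ z : ℤ, I.len i = z) (hc : Valid I c) :
    Valid I fun i => (⌊c i⌋ : ℝ) := by
  have hsep : ∀ i j, c i + I.len i ≤ c j → (⌊c i⌋ : ℝ) + I.len i ≤ ⌊c j⌋ := by
    intro i j h
    obtain ⟨z, hz⟩ := hlen i
    rw [hz] at h ⊢
    exact Int.cast_floor_add_le_cast_floor h
  obtain ⟨hrel, hlane, hinc⟩ := (valid_iff I c).1 hc
  refine (valid_iff I _).2 ⟨fun i => ?_, fun i j hij hl h => hsep i j (hlane i j hij hl h),
    fun i j hij => (hinc i j hij).imp (hsep i j) (hsep j i)⟩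
  obtain ⟨z, hz⟩ := hr i
  have := hrel i
  rw [hz] at this ⊢
  exact_mod_cast Int.le_floor.2 this

theorem Valid.exists_intCast_scheduleDelay_le {c : Fin n → ℝ} (hr : ∀ i, ∃ z : ℤ, I.r i = z)
    (hlen : ∀ i, ∃ z : ℤ, I.len i = z) (hc : Valid I c) :
    ∃ z : ℤ, (∃ c', Valid I c' ∧ scheduleDelay I c' = z) ∧ (z : ℝ) ≤ scheduleDelay I c := by
  choose rz hrz using hr
  obtain ⟨z, hz⟩ := Real.exists_iSup_eq_intCast fun i => ⌊c i⌋ - rz i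
  have hfloor : scheduleDelay I (fun i => (⌊c i⌋ : ℝ)) = z := by
    simpa [scheduleDelay, hrz] using hz
  refine ⟨z, ⟨_, hc.floor (fun i => ⟨rz i, hrz i⟩) hlen, hfloor⟩, ?_⟩
  exact hfloor ▸ scheduleDelay_mono fun i => Int.floor_le (c i)

end

/-- For integer release times and lengths, a minimum-delay valid schedule exists:
a valid schedule whose delay equals the infimum, over all valid schedules, of the
schedule delay; moreover this minimum delay is an integer. -/
theorem stmt2 {n : ℕ} (I : PlatoonInstance n)
    (hr : ∀ i, ∃ z : ℤ, I.r i = z) (hlen : ∀ i, ∃ z : ℤ, I.len i = z) :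
    ∃ c : Fin n → ℝ, Valid I c ∧
      scheduleDelay I c = sInf {d : ℝ | ∃ c', Valid I c' ∧ scheduleDelay I c' = d} ∧
      ∃ z : ℤ, scheduleDelay I c = z := by
  let IntDelay : ℤ → Prop := fun z => ∃ c, Valid I c ∧ scheduleDelay I c = z
  obtain ⟨c₀, hc₀⟩ := I.exists_valid
  have hne : ∃ z, IntDelay z :=
    (Valid.exists_intCast_scheduleDelay_le hr hlen hc₀).imp fun _ h => h.1
  have hbdd : ∃ b : ℤ, ∀ z, IntDelay z → b ≤ z := by
    refine ⟨0, fun z ⟨c, hc, hcz⟩ => ?_⟩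
    exact_mod_cast hcz ▸ Valid.scheduleDelay_nonneg hc
  obtain ⟨z₀, ⟨c, hc, hcz⟩, hmin⟩ := Int.exists_least_of_bdd hbdd hne
  have hleast :
      IsLeast {d : ℝ | ∃ c', Valid I c' ∧ scheduleDelay I c' = d} (scheduleDelay I c) := by
    refine ⟨⟨c, hc, rfl⟩, ?_⟩
    rintro _ ⟨c', hc', rfl⟩
    obtain ⟨z, hz, hle⟩ := Valid.exists_intCast_scheduleDelay_le hr hlen hc'
    rw [hcz]
    exact (Int.cast_le.2 (hmin z hz)).trans hle
  exact ⟨c, hc, hleast.csInf_eq.symm, z₀, hcz⟩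
end

section
/- Reduction correctness (core of NP-hardness of MULTI-CROSS): the associated MULTI-CROSS instance admits a valid schedule with delay at most 2q + 1 if and only if there is a partition of the index set {1, …, ℓ} into sets U and V with Σ_{i ∈ U} x_i = Σ_{i ∈ V} x_i = q. -/
/-- Lanes of the MULTI-CROSS instance built from `x 1, …, x l` with sum `2 * q`:
lane `a` is `0`, lane `b` is `1`, and the merge lanes `m_1, …, m_{l+1}` are
`2, …, l + 2`.  Platoon `0` (the long platoon `p₁`) is on lane `a`; platoon `1`
(the short platoon `p₂`) is on lane `b`; platoon `2` (the long platoon `p₃`) is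
on merge lane `m_{l+1}`; and for `1 ≤ i ≤ l`, platoon `2 + i` (which is
`p_{3+i}`) is on merge lane `m_i`. -/
def mcLane (l : ℕ) (i : Fin (l + 3)) : ℕ :=
  if (i : ℕ) = 0 then 0
  else if (i : ℕ) = 1 then 1
  else if (i : ℕ) = 2 then l + 2
  else (i : ℕ) - 1

/-- Release times: `p₁` is released at `0`, `p₂` at `2q`, and all merge-lane
platoons at `q`. -/
noncomputable def mcR (q : ℕ) {l : ℕ} (i : Fin (l + 3)) : ℝ :=
  if (i : ℕ) = 0 then 0
  else if (i : ℕ) = 1 then 2 * q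
  else q

/-- Lengths: `p₁` and `p₃` have length `4(q+1)`, `p₂` has length `1`, and
`p_{3+i}` has length `x i`. -/
noncomputable def mcLen (q : ℕ) (x : ℕ → ℕ) {l : ℕ} (i : Fin (l + 3)) : ℝ :=
  if (i : ℕ) = 0 then 4 * (q + 1)
  else if (i : ℕ) = 1 then 1
  else if (i : ℕ) = 2 then 4 * (q + 1)
  else x ((i : ℕ) - 2)

/-- Two platoons are incompatible exactly when they lie on two distinct merge
lanes, or when one of them is `p₂` (the platoon on lane `b` is incompatible with
every other platoon); `p₁` on lane `a` is compatible with all merge-lane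
platoons. -/
def mcIncompat (l : ℕ) (i j : Fin (l + 3)) : Prop :=
  i ≠ j ∧ ((i : ℕ) = 1 ∨ (j : ℕ) = 1 ∨
    (2 ≤ (i : ℕ) ∧ 2 ≤ (j : ℕ) ∧ mcLane l i ≠ mcLane l j))

/-- A valid schedule for the MULTI-CROSS instance: each platoon crosses no
earlier than its release time; platoons on the same lane cross in release order,
one finishing before the next crosses; and the open crossing intervals of
incompatible platoons are disjoint. -/
def mcValid (l q : ℕ) (x : ℕ → ℕ) (c : Fin (l + 3) → ℝ) : Prop :=
  (∀ i, mcR q i ≤ c i) ∧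
  (∀ i j, i ≠ j → mcLane l i = mcLane l j →
    mcR q i + mcLen q x i ≤ mcR q j → c i + mcLen q x i ≤ c j) ∧
  (∀ i j, mcIncompat l i j →
    Disjoint (Set.Ioo (c i) (c i + mcLen q x i))
             (Set.Ioo (c j) (c j + mcLen q x j)))

/-!
A schedule with delay at most `2q + 1` is forced into a rigid shape: the short platoon `p₂`
must cross exactly at `2q`, which pushes the long platoon `p₁` to `2q + 1` and the long merge
platoon `p₃` past `2q + 1`.  The remaining merge platoons are pairwise incompatible, so they
occupy disjoint intervals, all of them after their release time `q`, before `p₃`, hence before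
`3q + 1`, and none of them meeting `p₂`'s slot `(2q, 2q + 1)`.  Those in the window `[q, 2q]`
and those in `[2q + 1, 3q + 1]` therefore have total length at most `q` each, and as all lengths
add up to `2q`, both totals equal `q`.  Conversely, a partition into two halves of sum `q` is
scheduled by packing one half into each window, with `p₂` at `2q`, `p₁` at `2q + 1` and `p₃` at
`3q + 1`.
-/

open Set MeasureTheory

theorem Set.Ioo_disjoint_Ioo_of_le_or_le {α : Type*} [Preorder α] {a₁ a₂ b₁ b₂ : α}
    (h : a₂ ≤ b₁ ∨ b₂ ≤ a₁) : Disjoint (Ioo a₁ a₂) (Ioo b₁ b₂) := by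
  refine Set.disjoint_left.2 fun z hz hz' => ?_
  rcases h with h | h
  · exact (hz.2.trans_le h).not_gt hz'.1
  · exact (hz'.2.trans_le h).not_gt hz.1

theorem Set.le_or_le_of_Ioo_disjoint_Ioo {α : Type*} [LinearOrder α] [DenselyOrdered α]
    {a₁ a₂ b₁ b₂ : α} (ha : a₁ < a₂) (hb : b₁ < b₂) (h : Disjoint (Ioo a₁ a₂) (Ioo b₁ b₂)) :
    a₂ ≤ b₁ ∨ b₂ ≤ a₁ := by
  rw [Set.Ioo_disjoint_Ioo, min_le_iff, le_max_iff, le_max_iff] at h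
  rcases h with (h | h) | (h | h)
  · exact absurd h ha.not_ge
  · exact Or.inl h
  · exact Or.inr h
  · exact absurd h hb.not_ge

theorem Finset.sum_le_sub_of_pairwiseDisjoint_Ioo {ι : Type*} {s : Finset ι} {a len : ι → ℝ}
    {A B : ℝ} (hAB : A ≤ B) (hlen : ∀ i ∈ s, 0 ≤ len i)
    (hsub : ∀ i ∈ s, A ≤ a i ∧ a i + len i ≤ B)
    (hdisj : (s : Set ι).PairwiseDisjoint fun i => Set.Ioo (a i) (a i + len i)) :
    ∑ i ∈ s, len i ≤ B - A := by
  have hvol : ∑ i ∈ s, ENNReal.ofReal (len i) ≤ ENNReal.ofReal (B - A) :=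
    calc ∑ i ∈ s, ENNReal.ofReal (len i)
        = ∑ i ∈ s, volume (Set.Ioo (a i) (a i + len i)) := by
          simp only [Real.volume_Ioo, add_sub_cancel_left]
      _ = volume (⋃ i ∈ s, Set.Ioo (a i) (a i + len i)) :=
          (measure_biUnion_finset hdisj fun _ _ => measurableSet_Ioo).symm
      _ ≤ volume (Set.Ioo A B) :=
          measure_mono <| iUnion₂_subset fun i hi => Set.Ioo_subset_Ioo (hsub i hi).1 (hsub i hi).2
      _ = ENNReal.ofReal (B - A) := Real.volume_Ioo
  rwa [← ENNReal.ofReal_sum_of_nonneg hlen, ENNReal.ofReal_le_ofReal_iff (sub_nonneg.2 hAB)]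
    at hvol

section Packing

variable {ι : Type*} [LinearOrder ι] (S : Finset ι) (w : ι → ℝ) (A : ℝ)

noncomputable def packedStart (n : ι) : ℝ :=
  A + ∑ k ∈ S with k < n, w k

variable {S w A}

theorem le_packedStart (hw : ∀ k ∈ S, 0 ≤ w k) (n : ι) : A ≤ packedStart S w A n :=
  le_add_of_nonneg_right (Finset.sum_nonneg fun k hk => hw k (Finset.mem_filter.1 hk).1)

theorem packedStart_add_le_packedStart (hw : ∀ k ∈ S, 0 ≤ w k) {m n : ι} (hm : m ∈ S)
    (hmn : m < n) : packedStart S w A m + w m ≤ packedStart S w A n := by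
  have hsub : insert m (S.filter (· < m)) ⊆ S.filter (· < n) := by
    simp only [Finset.insert_subset_iff, Finset.mem_filter]
    exact ⟨⟨hm, hmn⟩, fun k hk => by
      simp only [Finset.mem_filter] at hk ⊢
      exact ⟨hk.1, hk.2.trans hmn⟩⟩
  have := Finset.sum_le_sum_of_subset_of_nonneg hsub fun k hk _ => hw k (Finset.mem_filter.1 hk).1
  rw [Finset.sum_insert (by simp)] at this
  simp only [packedStart]
  linarith

theorem packedStart_add_le (hw : ∀ k ∈ S, 0 ≤ w k) {n : ι} (hn : n ∈ S) :
    packedStart S w A n + w n ≤ A + ∑ k ∈ S, w k := by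
  have hsub : insert n (S.filter (· < n)) ⊆ S :=
    Finset.insert_subset hn (Finset.filter_subset _ _)
  have := Finset.sum_le_sum_of_subset_of_nonneg hsub fun k hk _ => hw k hk
  rw [Finset.sum_insert (by simp)] at this
  simp only [packedStart]
  linarith

theorem pairwiseDisjoint_Ioo_packedStart (hw : ∀ k ∈ S, 0 ≤ w k) :
    (S : Set ι).PairwiseDisjoint
      fun n => Ioo (packedStart S w A n) (packedStart S w A n + w n) := by
  intro m hm n hn hmn
  apply Set.Ioo_disjoint_Ioo_of_le_or_le
  rcases hmn.lt_or_gt with h | h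
  · exact Or.inl (packedStart_add_le_packedStart hw hm h)
  · exact Or.inr (packedStart_add_le_packedStart hw hn h)

end Packing

section TwoWindows

variable {ι : Type*} {I : Finset ι} {x : ι → ℕ} {q : ℕ} {A B : ℝ}

theorem exists_partition_of_pairwiseDisjoint_Ioo [DecidableEq ι] {s : ι → ℝ}
    (hdisj : (I : Set ι).PairwiseDisjoint fun n => Ioo (s n) (s n + x n))
    (hwin : ∀ n ∈ I, (A ≤ s n ∧ s n + x n ≤ A + q) ∨ (B ≤ s n ∧ s n + x n ≤ B + q))
    (hsum : ∑ n ∈ I, x n = 2 * q) :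
    ∃ U V : Finset ι, U ∪ V = I ∧ Disjoint U V ∧ ∑ n ∈ U, x n = q ∧ ∑ n ∈ V, x n = q := by
  set U := I.filter fun n => A ≤ s n ∧ s n + x n ≤ A + q
  set V := I.filter fun n => ¬(A ≤ s n ∧ s n + x n ≤ A + q)
  have hUV : U ∪ V = I := Finset.filter_union_filter_not_eq _ _
  have hdisjUV : Disjoint U V := Finset.disjoint_filter_filter_not _ _ _
  have hU : ∑ n ∈ U, x n ≤ q := by
    have := Finset.sum_le_sub_of_pairwiseDisjoint_Ioo (s := U)
      (le_add_of_nonneg_right q.cast_nonneg)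
      (fun n _ => (x n).cast_nonneg) (fun n hn => (Finset.mem_filter.1 hn).2)
      (hdisj.subset (Finset.coe_subset.2 (Finset.filter_subset _ _)))
    exact_mod_cast (show ((∑ n ∈ U, x n : ℕ) : ℝ) ≤ q by push_cast; linarith)
  have hV : ∑ n ∈ V, x n ≤ q := by
    have := Finset.sum_le_sub_of_pairwiseDisjoint_Ioo (s := V)
      (le_add_of_nonneg_right q.cast_nonneg)
      (fun n _ => (x n).cast_nonneg)
      (fun n hn => ((hwin n (Finset.mem_filter.1 hn).1).resolve_left (Finset.mem_filter.1 hn).2))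
      (hdisj.subset (Finset.coe_subset.2 (Finset.filter_subset _ _)))
    exact_mod_cast (show ((∑ n ∈ V, x n : ℕ) : ℝ) ≤ q by push_cast; linarith)
  have htotal : ∑ n ∈ U, x n + ∑ n ∈ V, x n = 2 * q := by
    rw [← Finset.sum_union hdisjUV, hUV, hsum]
  exact ⟨U, V, hUV, hdisjUV, by omega, by omega⟩

theorem exists_pairwiseDisjoint_Ioo_of_partition [LinearOrder ι] (hAB : A + q ≤ B)
    {U V : Finset ι} (hUV : U ∪ V = I) (hU : ∑ n ∈ U, x n = q) (hV : ∑ n ∈ V, x n = q) :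
    ∃ s : ι → ℝ, (I : Set ι).PairwiseDisjoint (fun n => Ioo (s n) (s n + x n)) ∧
      ∀ n ∈ I, (A ≤ s n ∧ s n + x n ≤ A + q) ∨ (B ≤ s n ∧ s n + x n ≤ B + q) := by
  have hw : ∀ k, (0 : ℝ) ≤ x k := fun k => (x k).cast_nonneg
  have hUwin : ∀ n ∈ U, A ≤ packedStart U (x ·) A n ∧ packedStart U (x ·) A n + x n ≤ A + q :=
    fun n hn => ⟨le_packedStart (fun k _ => hw k) n, by
      have h := packedStart_add_le (A := A) (fun k _ => hw k) hn
      rwa [← Nat.cast_sum, hU] at h⟩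
  have hVwin : ∀ n ∈ V, B ≤ packedStart V (x ·) B n ∧ packedStart V (x ·) B n + x n ≤ B + q :=
    fun n hn => ⟨le_packedStart (fun k _ => hw k) n, by
      have h := packedStart_add_le (A := B) (fun k _ => hw k) hn
      rwa [← Nat.cast_sum, hV] at h⟩
  refine ⟨fun n => if n ∈ U then packedStart U (x ·) A n else packedStart V (x ·) B n, ?_, ?_⟩
  · intro m hm n hn hmn
    show Disjoint (Ioo _ _) (Ioo _ _)
    rw [← hUV] at hm hn
    by_cases hmU : m ∈ U <;> by_cases hnU : n ∈ U <;> simp only [hmU, hnU, ↓reduceIte]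
    · exact pairwiseDisjoint_Ioo_packedStart (fun k _ => hw k) hmU hnU hmn
    · have hnV := (Finset.mem_union.1 hn).resolve_left hnU
      exact Set.Ioo_disjoint_Ioo_of_le_or_le <| Or.inl <| by
        linarith [(hUwin m hmU).2, (hVwin n hnV).1]
    · have hmV := (Finset.mem_union.1 hm).resolve_left hmU
      exact Set.Ioo_disjoint_Ioo_of_le_or_le <| Or.inr <| by
        linarith [(hUwin n hnU).2, (hVwin m hmV).1]
    · exact pairwiseDisjoint_Ioo_packedStart (fun k _ => hw k)
        ((Finset.mem_union.1 hm).resolve_left hmU) ((Finset.mem_union.1 hn).resolve_left hnU) hmn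
  · intro n hn
    by_cases hnU : n ∈ U
    · simpa [hnU] using Or.inl (hUwin n hnU)
    · rw [← hUV] at hn
      have hnV : n ∈ V := (Finset.mem_union.1 hn).resolve_left hnU
      simpa [hnU] using Or.inr (hVwin n hnV)

end TwoWindows

section Instance

variable {l q : ℕ} {x : ℕ → ℕ}

@[simp]
theorem Nat.two_mod_add_three (l : ℕ) : 2 % (l + 3) = 2 :=
  Nat.mod_eq_of_lt (by omega)

@[simp] theorem mcR_zero : mcR q (0 : Fin (l + 3)) = 0 := by simp [mcR]
@[simp] theorem mcR_one : mcR q (1 : Fin (l + 3)) = 2 * q := by simp [mcR]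
@[simp] theorem mcR_two : mcR q (2 : Fin (l + 3)) = q := by simp [mcR]
@[simp] theorem mcLen_zero : mcLen q x (0 : Fin (l + 3)) = 4 * (q + 1) := by simp [mcLen]
@[simp] theorem mcLen_one : mcLen q x (1 : Fin (l + 3)) = 1 := by simp [mcLen]
@[simp] theorem mcLen_two : mcLen q x (2 : Fin (l + 3)) = 4 * (q + 1) := by simp [mcLen]

/-- The platoon `p_{3+n}` on merge lane `m_n`, for `1 ≤ n ≤ l`. -/
def mergePlatoon (l n : ℕ) : Fin (l + 3) :=
  Fin.ofNat (l + 3) (n + 2)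

theorem val_mergePlatoon {n : ℕ} (hn : n ∈ Finset.Icc 1 l) :
    (mergePlatoon l n : ℕ) = n + 2 := by
  rw [Finset.mem_Icc] at hn
  rw [mergePlatoon, Fin.val_ofNat, Nat.mod_eq_of_lt (by omega)]

theorem mcR_mergePlatoon {n : ℕ} (hn : n ∈ Finset.Icc 1 l) : mcR q (mergePlatoon l n) = q := by
  simp [mcR, val_mergePlatoon hn]

theorem mcLen_mergePlatoon {n : ℕ} (hn : n ∈ Finset.Icc 1 l) :
    mcLen q x (mergePlatoon l n) = x n := by
  have := (Finset.mem_Icc.1 hn).1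
  simp [mcLen, val_mergePlatoon hn]
  omega

theorem mcLane_mergePlatoon {n : ℕ} (hn : n ∈ Finset.Icc 1 l) :
    mcLane l (mergePlatoon l n) = n + 1 := by
  have := (Finset.mem_Icc.1 hn).1
  simp [mcLane, val_mergePlatoon hn]
  omega

theorem platoon_cases (i : Fin (l + 3)) :
    i = 0 ∨ i = 1 ∨ i = 2 ∨ ∃ n ∈ Finset.Icc 1 l, i = mergePlatoon l n := by
  rcases i with ⟨_ | _ | _ | k, hk⟩
  · exact Or.inl rfl
  · exact Or.inr (Or.inl (Fin.ext (by simp)))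
  · exact Or.inr (Or.inr (Or.inl (Fin.ext (by simp))))
  · have hk' : k + 1 ∈ Finset.Icc 1 l := Finset.mem_Icc.2 ⟨by omega, by omega⟩
    exact Or.inr (Or.inr (Or.inr ⟨k + 1, hk', Fin.ext (by rw [val_mergePlatoon hk'])⟩))

theorem mcLane_injective : Function.Injective (mcLane l) := by
  intro i j h
  have := i.isLt
  have := j.isLt
  simp only [mcLane] at h
  apply Fin.ext
  split_ifs at h <;> omega

theorem mergePlatoon_ne_one {n : ℕ} (hn : n ∈ Finset.Icc 1 l) : mergePlatoon l n ≠ 1 := by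
  simp [Fin.ext_iff, val_mergePlatoon hn]

theorem mcIncompat_one_left {j : Fin (l + 3)} (hj : j ≠ 1) : mcIncompat l 1 j :=
  ⟨hj.symm, Or.inl (by simp)⟩

theorem mcIncompat_mergePlatoon_two {n : ℕ} (hn : n ∈ Finset.Icc 1 l) :
    mcIncompat l (mergePlatoon l n) 2 := by
  obtain ⟨h1, h2⟩ := Finset.mem_Icc.1 hn
  refine ⟨fun h => ?_, Or.inr (Or.inr ⟨?_, by simp, ?_⟩)⟩
  · have := congrArg Fin.val h
    simp [val_mergePlatoon hn] at this
    omega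
  · rw [val_mergePlatoon hn]
    omega
  · rw [mcLane_mergePlatoon hn]
    simp [mcLane]
    omega

theorem mcIncompat_mergePlatoon {m n : ℕ} (hm : m ∈ Finset.Icc 1 l) (hn : n ∈ Finset.Icc 1 l)
    (hmn : m ≠ n) : mcIncompat l (mergePlatoon l m) (mergePlatoon l n) := by
  refine ⟨fun h => hmn ?_, Or.inr (Or.inr ⟨?_, ?_, ?_⟩)⟩
  · simpa [val_mergePlatoon hm, val_mergePlatoon hn] using congrArg Fin.val h
  · simp [val_mergePlatoon hm]
  · simp [val_mergePlatoon hn]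
  · simpa [mcLane_mergePlatoon hm, mcLane_mergePlatoon hn] using hmn

def crossing (q : ℕ) (x : ℕ → ℕ) {l : ℕ} (c : Fin (l + 3) → ℝ) (i : Fin (l + 3)) : Set ℝ :=
  Ioo (c i) (c i + mcLen q x i)

theorem crossing_mergePlatoon {c : Fin (l + 3) → ℝ} {n : ℕ} (hn : n ∈ Finset.Icc 1 l) :
    crossing q x c (mergePlatoon l n) =
      Ioo (c (mergePlatoon l n)) (c (mergePlatoon l n) + x n) := by
  rw [crossing, mcLen_mergePlatoon hn]

theorem le_or_le_of_disjoint_crossing {c : Fin (l + 3) → ℝ} {i j : Fin (l + 3)}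
    (hi : 0 < mcLen q x i) (hj : 0 < mcLen q x j)
    (h : Disjoint (crossing q x c i) (crossing q x c j)) :
    c i + mcLen q x i ≤ c j ∨ c j + mcLen q x j ≤ c i :=
  Set.le_or_le_of_Ioo_disjoint_Ioo (lt_add_of_pos_right _ hi) (lt_add_of_pos_right _ hj) h

theorem disjoint_crossing_of_le_or_le {c : Fin (l + 3) → ℝ} {i j : Fin (l + 3)}
    (h : c i + mcLen q x i ≤ c j ∨ c j + mcLen q x j ≤ c i) :
    Disjoint (crossing q x c i) (crossing q x c j) :=
  Set.Ioo_disjoint_Ioo_of_le_or_le h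

theorem mcValid_iff {c : Fin (l + 3) → ℝ} :
    mcValid l q x c ↔ (∀ i, mcR q i ≤ c i) ∧
      (∀ j ≠ 1, Disjoint (crossing q x c 1) (crossing q x c j)) ∧
      (∀ n ∈ Finset.Icc 1 l, Disjoint (crossing q x c (mergePlatoon l n)) (crossing q x c 2)) ∧
      (Finset.Icc 1 l : Set ℕ).PairwiseDisjoint
        fun n => Ioo (c (mergePlatoon l n)) (c (mergePlatoon l n) + x n) := by
  constructor
  · rintro ⟨hrel, -, hdisj⟩
    refine ⟨hrel, fun j hj => hdisj 1 j (mcIncompat_one_left hj),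
      fun n hn => hdisj _ 2 (mcIncompat_mergePlatoon_two hn), fun m hm n hn hmn => ?_⟩
    have := hdisj _ _ (mcIncompat_mergePlatoon hm hn hmn)
    rwa [mcLen_mergePlatoon hm, mcLen_mergePlatoon hn] at this
  · rintro ⟨hrel, hone, htwo, hmerge⟩
    refine ⟨hrel, fun i j hij hlane _ => absurd (mcLane_injective hlane) hij, ?_⟩
    rintro i j ⟨hij, hi | hj | ⟨hi, hj, -⟩⟩
    · obtain rfl : i = 1 := Fin.ext (by simpa using hi)
      exact hone j hij.symm
    · obtain rfl : j = 1 := Fin.ext (by simpa using hj)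
      exact (hone i hij).symm
    · rcases platoon_cases i with rfl | rfl | rfl | ⟨m, hm, rfl⟩ <;> try simp at hi
      all_goals rcases platoon_cases j with rfl | rfl | rfl | ⟨n, hn, rfl⟩ <;> try simp at hj
      · exact absurd rfl hij
      · exact (htwo n hn).symm
      · exact htwo m hm
      · show Disjoint (crossing q x c _) (crossing q x c _)
        rw [crossing_mergePlatoon hm, crossing_mergePlatoon hn]
        exact hmerge hm hn fun h => hij (h ▸ rfl)

end Instance

section Schedule

variable {l q : ℕ} {x : ℕ → ℕ} {c : Fin (l + 3) → ℝ}

theorem mcValid.apply_one_eq (hv : mcValid l q x c)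
    (hdel : ∀ i, c i - mcR q i ≤ 2 * (q : ℝ) + 1) : c 1 = 2 * q := by
  obtain ⟨hrel, hone, -, -⟩ := mcValid_iff.1 hv
  have h := le_or_le_of_disjoint_crossing (by simp) (by simp; positivity) (hone 0 (by simp))
  have h₀ : 0 ≤ c 0 := by simpa using hrel 0
  have h₀' : c 0 ≤ 2 * q + 1 := by simpa using hdel 0
  have h₁ : 2 * q ≤ c 1 := by simpa using hrel 1
  have h₁' : c 1 - 2 * q ≤ 2 * q + 1 := by simpa using hdel 1
  rw [mcLen_zero, mcLen_one] at h
  rcases h with h | h <;> linarith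

theorem mcValid.le_apply_two (hv : mcValid l q x c)
    (hdel : ∀ i, c i - mcR q i ≤ 2 * (q : ℝ) + 1) : 2 * q + 1 ≤ c 2 := by
  obtain ⟨hrel, hone, -, -⟩ := mcValid_iff.1 hv
  have h := le_or_le_of_disjoint_crossing (by simp) (by simp; positivity)
    (hone 2 (by simp [Fin.ext_iff]))
  have h₂ : (q : ℝ) ≤ c 2 := by simpa using hrel 2
  rw [mcLen_one, mcLen_two, hv.apply_one_eq hdel] at h
  rcases h with h | h <;> linarith

theorem mcValid.mergePlatoon_window (hv : mcValid l q x c)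
    (hdel : ∀ i, c i - mcR q i ≤ 2 * (q : ℝ) + 1) {n : ℕ} (hn : n ∈ Finset.Icc 1 l)
    (hxn : 0 < x n) :
    (q ≤ c (mergePlatoon l n) ∧ c (mergePlatoon l n) + x n ≤ q + q) ∨
      (2 * q + 1 ≤ c (mergePlatoon l n) ∧ c (mergePlatoon l n) + x n ≤ 2 * q + 1 + q) := by
  obtain ⟨hrel, hone, htwo, -⟩ := mcValid_iff.1 hv
  set t := c (mergePlatoon l n)
  have hpos : (0 : ℝ) < mcLen q x (mergePlatoon l n) := by
    rw [mcLen_mergePlatoon hn]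
    exact_mod_cast hxn
  have hp₂ := le_or_le_of_disjoint_crossing (by simp) hpos (hone _ (mergePlatoon_ne_one hn))
  have hp₃ := le_or_le_of_disjoint_crossing hpos (by simp; positivity) (htwo n hn)
  rw [mcLen_mergePlatoon hn, mcLen_one, hv.apply_one_eq hdel] at hp₂
  rw [mcLen_mergePlatoon hn, mcLen_two] at hp₃
  have hrel_t : (q : ℝ) ≤ t := by simpa [mcR_mergePlatoon hn] using hrel (mergePlatoon l n)
  have hdel_t : t - q ≤ 2 * q + 1 := by simpa [mcR_mergePlatoon hn] using hdel (mergePlatoon l n)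
  have hdel₂ : c 2 - q ≤ 2 * q + 1 := by simpa using hdel 2
  have hend : t + x n ≤ 2 * q + 1 + q := by
    rcases hp₃ with h | h <;> linarith [hv.le_apply_two hdel]
  rcases hp₂ with h | h
  · exact Or.inr ⟨by linarith, hend⟩
  · exact Or.inl ⟨hrel_t, by linarith⟩

end Schedule

section Construction

variable {l q : ℕ} {x : ℕ → ℕ}

noncomputable def scheduleOfStarts (q : ℕ) (s : ℕ → ℝ) {l : ℕ} (i : Fin (l + 3)) : ℝ :=
  if (i : ℕ) = 0 then 2 * q + 1
  else if (i : ℕ) = 1 then 2 * q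
  else if (i : ℕ) = 2 then 3 * q + 1
  else s ((i : ℕ) - 2)

variable {s : ℕ → ℝ}

@[simp] theorem scheduleOfStarts_zero : scheduleOfStarts q s (0 : Fin (l + 3)) = 2 * q + 1 := by
  simp [scheduleOfStarts]
@[simp] theorem scheduleOfStarts_one : scheduleOfStarts q s (1 : Fin (l + 3)) = 2 * q := by
  simp [scheduleOfStarts]
@[simp] theorem scheduleOfStarts_two : scheduleOfStarts q s (2 : Fin (l + 3)) = 3 * q + 1 := by
  simp [scheduleOfStarts]

theorem scheduleOfStarts_mergePlatoon {n : ℕ} (hn : n ∈ Finset.Icc 1 l) :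
    scheduleOfStarts q s (mergePlatoon l n) = s n := by
  have := (Finset.mem_Icc.1 hn).1
  simp [scheduleOfStarts, val_mergePlatoon hn]
  omega

theorem mcValid_scheduleOfStarts
    (hwin : ∀ n ∈ Finset.Icc 1 l,
      (q ≤ s n ∧ s n + x n ≤ q + q) ∨ (2 * q + 1 ≤ s n ∧ s n + x n ≤ 2 * q + 1 + q))
    (hdisj : (Finset.Icc 1 l : Set ℕ).PairwiseDisjoint fun n => Ioo (s n) (s n + x n)) :
    mcValid l q x (scheduleOfStarts q s) := by
  have hq : (0 : ℝ) ≤ q := q.cast_nonneg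
  refine mcValid_iff.2 ⟨fun i => ?_, fun j hj => disjoint_crossing_of_le_or_le ?_,
    fun n hn => disjoint_crossing_of_le_or_le (Or.inl ?_), fun m hm n hn hmn => ?_⟩
  · rcases platoon_cases i with rfl | rfl | rfl | ⟨n, hn, rfl⟩
    · simp; linarith
    · simp
    · simp; linarith
    · rw [scheduleOfStarts_mergePlatoon hn, mcR_mergePlatoon hn]
      rcases hwin n hn with h | h <;> linarith [h.1]
  · rcases platoon_cases j with rfl | rfl | rfl | ⟨n, hn, rfl⟩
    · exact Or.inl (by simp)
    · exact absurd rfl hj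
    · exact Or.inl (by simp; linarith)
    · rw [scheduleOfStarts_mergePlatoon hn, mcLen_mergePlatoon hn]
      rcases hwin n hn with h | h
      · exact Or.inr (by simp; linarith [h.2])
      · exact Or.inl (by simp; linarith [h.1])
  · rw [scheduleOfStarts_mergePlatoon hn, mcLen_mergePlatoon hn]
    rcases hwin n hn with h | h <;> simp <;> linarith [h.2]
  · simpa only [Function.onFun, scheduleOfStarts_mergePlatoon hm,
      scheduleOfStarts_mergePlatoon hn] using hdisj hm hn hmn

theorem scheduleOfStarts_sub_mcR_le
    (hwin : ∀ n ∈ Finset.Icc 1 l,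
      (q ≤ s n ∧ s n + x n ≤ q + q) ∨ (2 * q + 1 ≤ s n ∧ s n + x n ≤ 2 * q + 1 + q))
    (i : Fin (l + 3)) : scheduleOfStarts q s i - mcR q i ≤ 2 * q + 1 := by
  have hq : (0 : ℝ) ≤ q := q.cast_nonneg
  rcases platoon_cases i with rfl | rfl | rfl | ⟨n, hn, rfl⟩
  · simp
  · simp; linarith
  · simp; linarith
  · rw [scheduleOfStarts_mergePlatoon hn, mcR_mergePlatoon hn]
    have : (0 : ℝ) ≤ x n := (x n).cast_nonneg
    rcases hwin n hn with h | h <;> linarith [h.2]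

end Construction

theorem stmt13_general (l q : ℕ) (x : ℕ → ℕ)
    (hx : ∀ i, 1 ≤ i → i ≤ l → 0 < x i)
    (hsum : ∑ i ∈ Finset.Icc 1 l, x i = 2 * q) :
    (∃ c : Fin (l + 3) → ℝ, mcValid l q x c ∧
        ∀ i, c i - mcR q i ≤ 2 * (q : ℝ) + 1) ↔
      ∃ U V : Finset ℕ, U ∪ V = Finset.Icc 1 l ∧ Disjoint U V ∧
        ∑ i ∈ U, x i = q ∧ ∑ i ∈ V, x i = q := by
  constructor
  · rintro ⟨c, hv, hdel⟩
    refine exists_partition_of_pairwiseDisjoint_Ioo (mcValid_iff.1 hv).2.2.2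
      (fun n hn => hv.mergePlatoon_window hdel hn ?_) hsum
    exact hx n (Finset.mem_Icc.1 hn).1 (Finset.mem_Icc.1 hn).2
  · rintro ⟨U, V, hUV, -, hU, hV⟩
    obtain ⟨s, hdisj, hwin⟩ := exists_pairwiseDisjoint_Ioo_of_partition
      (A := q) (B := 2 * q + 1) (by linarith) hUV hU hV
    exact ⟨scheduleOfStarts q s, mcValid_scheduleOfStarts hwin hdisj,
      scheduleOfStarts_sub_mcR_le hwin⟩

/-- Reduction correctness (core of the NP-hardness of MULTI-CROSS): the
associated MULTI-CROSS instance admits a valid schedule with delay at most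
`2q + 1` if and only if the index set `{1, …, l}` can be partitioned into `U`
and `V` with `Σ_{i ∈ U} x i = Σ_{i ∈ V} x i = q`. -/
theorem stmt13 (l q : ℕ) (x : ℕ → ℕ) (hq : 0 < q)
    (hx : ∀ i, 1 ≤ i → i ≤ l → 0 < x i)
    (hsum : ∑ i ∈ Finset.Icc 1 l, x i = 2 * q) :
    (∃ c : Fin (l + 3) → ℝ, mcValid l q x c ∧
        ∀ i, c i - mcR q i ≤ 2 * (q : ℝ) + 1) ↔
      ∃ U V : Finset ℕ, U ∪ V = Finset.Icc 1 l ∧ Disjoint U V ∧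
        ∑ i ∈ U, x i = q ∧ ∑ i ∈ V, x i = q :=
  stmt13_general l q x hx hsum
end
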